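/- arXiv:1510.08044 — 3 statements merged into one kernel-verified Lean document; each statement's English description precedes it below -/
import Mathlib

section
/- Let (X, π) be a pretopological space and A ⊆ X. Then the following are equivalent: (1) for every filter F on X, adh_π F ∩ A = ∅ implies there is F ∈ F with adh_π F ∩ A = ∅; (2) A is cover-compact, i.e., every cover C of A admits C₁,…,Cₙ ∈ C with A ⊆ inh_π(C₁ ∪ … ∪ Cₙ); (3) for every filter F with adh_π F ∩ A = ∅ there exist V ⊆ X and F ∈ F with A ⊆ inh_π V and V ∩ F = ∅. -/
/-! Since `inh` is monotone, (3) amounts to taking `V = Bᶜ`, and `A ⊆ inh Bᶜ` says exactly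
that `adhS B` misses `A`; so (1) ⇔ (3). If `adh F` misses `A`, the sets `U` with
`Uᶜ ∈ F` cover `A`, and a finite subcover has its union's complement in `F`: this gives (3) from
cover-compactness. Conversely, a cover `C` of `A` yields the filter generated by the complements
of its members, whose adherence misses `A`; a member `B` given by (1) contains a finite
intersection of such complements, and `A ⊆ inh Bᶜ` is then the required finite subcover. -/

open Set Filter

/-- A pretopological space: a vicinity filter at each point containing the point. -/
structure Pretop (X : Type*) where
  V : X → Filter X
  pure_le : ∀ x : X, (pure x : Filter X) ≤ V x

/-- Two filters meet (`F # G`). -/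
def Meets {X : Type*} (F G : Filter X) : Prop :=
  ∀ A ∈ F, ∀ B ∈ G, (A ∩ B).Nonempty

namespace Pretop

variable {X Y : Type*} (π : Pretop X)

/-- Convergence: `F → x` iff `F ⊇ V x`. -/
def Conv (F : Filter X) (x : X) : Prop := F ≤ π.V x

/-- Adherence of a filter. -/
def adh (F : Filter X) : Set X := {x | Meets (π.V x) F}

/-- Adherence of a set (adherence of its principal filter). -/
def adhS (A : Set X) : Set X := {x | ∀ U ∈ π.V x, (U ∩ A).Nonempty}

/-- Inherence of a set. -/
def inh (A : Set X) : Set X := (π.adhS Aᶜ)ᶜ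

/-- A compact pretopological space: every proper filter has nonempty adherence. -/
def IsCompactPre : Prop := ∀ F : Filter X, F.NeBot → (π.adh F).Nonempty

/-- Hausdorff: distinct points have disjoint vicinities. -/
def HausdorffPre : Prop :=
  ∀ x y : X, x ≠ y → ∃ U ∈ π.V x, ∃ W ∈ π.V y, U ∩ W = ∅

/-- `F` is compact at `A`: every filter meeting `F` has adherence meeting `A`. -/
def CompactAt (F : Filter X) (A : Set X) : Prop :=
  ∀ G : Filter X, Meets G F → (π.adh G ∩ A).Nonempty

/-- A cover of `A`: every point of `A` has a member of `C` as a vicinity. -/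
def IsCover (C : Set (Set X)) (A : Set X) : Prop :=
  ∀ x ∈ A, ∃ U ∈ C, U ∈ π.V x

/-- Cover-compactness. -/
def CoverCompact (A : Set X) : Prop :=
  ∀ C : Set (Set X), π.IsCover C A →
    ∃ D : Finset (Set X), ↑D ⊆ C ∧ A ⊆ π.inh (⋃ U ∈ D, U)

lemma mem_of_vicinity {x : X} {U : Set X} (h : U ∈ π.V x) : x ∈ U := π.pure_le x h

lemma subset_adhS (A : Set X) : A ⊆ π.adhS A :=
  fun x hx U hU => ⟨x, π.mem_of_vicinity hU, hx⟩

lemma adhS_mono {A B : Set X} (h : A ⊆ B) : π.adhS A ⊆ π.adhS B :=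
  fun x hx U hU => (hx U hU).imp fun y hy => ⟨hy.1, h hy.2⟩

lemma adhS_empty : π.adhS (∅ : Set X) = ∅ := by
  ext x
  simp only [adhS, mem_setOf_eq, Set.inter_empty, Set.mem_empty_iff_false, iff_false]
  intro h
  simpa using h univ univ_mem

lemma adhS_union (A B : Set X) : π.adhS (A ∪ B) = π.adhS A ∪ π.adhS B := by
  apply Subset.antisymm
  · intro x hx
    by_contra hc
    simp only [Set.mem_union, not_or] at hc
    obtain ⟨h1, h2⟩ := hc
    simp only [adhS, mem_setOf_eq, not_forall] at h1 h2
    obtain ⟨U, hU, hUA⟩ := h1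
    obtain ⟨W, hW, hWB⟩ := h2
    obtain ⟨z, hz⟩ := hx (U ∩ W) (inter_mem hU hW)
    rcases hz.2 with hA | hB
    · exact hUA ⟨z, hz.1.1, hA⟩
    · exact hWB ⟨z, hz.1.2, hB⟩
  · exact Set.union_subset (π.adhS_mono Set.subset_union_left)
      (π.adhS_mono Set.subset_union_right)

lemma inh_mono {A B : Set X} (h : A ⊆ B) : π.inh A ⊆ π.inh B :=
  Set.compl_subset_compl.mpr (π.adhS_mono (Set.compl_subset_compl.mpr h))

lemma inh_inter (A B : Set X) : π.inh (A ∩ B) = π.inh A ∩ π.inh B := by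
  simp only [inh, Set.compl_inter, adhS_union, Set.compl_union]

lemma inh_univ : π.inh (univ : Set X) = univ := by
  simp [inh, adhS_empty]

lemma inh_subset (A : Set X) : π.inh A ⊆ A := by
  intro x hx
  by_contra hxA
  exact hx (π.subset_adhS Aᶜ hxA)

/-- The filter `F¹` of members of `F` whose inherence also belongs to `F`. -/
def F1 (F : Filter X) : Filter X where
  sets := {A | A ∈ F ∧ π.inh A ∈ F}
  univ_sets := ⟨univ_mem, by rw [π.inh_univ]; exact univ_mem⟩
  sets_of_superset := fun hA hAB =>
    ⟨mem_of_superset hA.1 hAB, mem_of_superset hA.2 (π.inh_mono hAB)⟩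
  inter_sets := fun hA hB =>
    ⟨inter_mem hA.1 hB.1, by rw [π.inh_inter]; exact inter_mem hA.2 hB.2⟩

lemma mem_F1 {F : Filter X} {A : Set X} : A ∈ π.F1 F ↔ A ∈ F ∧ π.inh A ∈ F := Iff.rfl

/-- The partial regularization `rπ`: vicinities generated by adherences of vicinities. -/
def rpre : Pretop X where
  V x := (π.V x).lift' π.adhS
  pure_le x := le_lift'.mpr fun U hU =>
    mem_pure.mpr (π.subset_adhS U (π.mem_of_vicinity hU))

lemma mem_rpre {x : X} {A : Set X} :
    A ∈ (π.rpre).V x ↔ ∃ U ∈ π.V x, π.adhS U ⊆ A :=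
  mem_lift'_sets fun _ _ h => π.adhS_mono h

end Pretop

/-- Continuity of maps between pretopological spaces. -/
def ContPre {X Y : Type*} (π : Pretop X) (τ : Pretop Y) (f : X → Y) : Prop :=
  ∀ x : X, ∀ W ∈ τ.V (f x), ∃ U ∈ π.V x, f '' U ⊆ W

/-- Perfect maps between pretopological spaces. -/
def PerfectPre {X Y : Type*} (π : Pretop X) (τ : Pretop Y) (f : X → Y) : Prop :=
  ∀ (F : Filter Y) (y : Y), τ.Conv F y → π.CompactAt (F.comap f) (f ⁻¹' {y})

/-- The filter of vicinities of a set `A`. -/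
def VSet {X : Type*} (π : Pretop X) (A : Set X) : Filter X where
  sets := {V | A ⊆ π.inh V}
  univ_sets := by simp [π.inh_univ]
  sets_of_superset := fun h hsub => h.trans (π.inh_mono hsub)
  inter_sets := fun h1 h2 => by
    rw [Set.mem_setOf_eq, π.inh_inter]; exact Set.subset_inter h1 h2

lemma mem_VSet {X : Type*} {π : Pretop X} {A V : Set X} :
    V ∈ VSet π A ↔ A ⊆ π.inh V := Iff.rfl

/-- `f^#[A] = {y : f⁻¹(y) ⊆ A}`. -/
def fsharp {X Y : Type*} (f : X → Y) (A : Set X) : Set Y := {y | f ⁻¹' {y} ⊆ A}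

/-- The θ-quotient pretopology on `Y`. -/
def thetaQuot {X Y : Type*} (π : Pretop X) (f : X → Y) : Pretop Y where
  V y := (VSet π (f ⁻¹' {y})).lift' (fsharp f)
  pure_le y := le_lift'.mpr fun V hV =>
    mem_pure.mpr (fun x hx => π.inh_subset V ((mem_VSet.mp hV) hx))

/-- Strong irreducibility. -/
def StronglyIrreducible {X Y : Type*} (π : Pretop X) (f : X → Y) : Prop :=
  ∀ U V : Set X, (π.inh U).Nonempty → (π.inh V).Nonempty → (U ∩ V).Nonempty →
    ∃ y : Y, f ⁻¹' {y} ⊆ U ∩ V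

/-- The simple extension `Y⁺` determined by a dense subset `S`. -/
def extPlus {X : Type*} (ρ : Pretop X) (S : Set X) : Pretop X where
  V p := (ρ.V p).lift' (fun W => insert p (W ∩ S))
  pure_le p := le_lift'.mpr fun W _ => mem_pure.mpr (Set.mem_insert p _)

/-- `o(A) = {p : ∃ W ∈ V(p), W ∩ S = A}`. -/
def oSet {X : Type*} (ρ : Pretop X) (S : Set X) (A : Set X) : Set X :=
  {p | ∃ W ∈ ρ.V p, W ∩ S = A}

/-- The strict extension `Y^#` determined by a dense subset `S`. -/
def extSharp {X : Type*} (ρ : Pretop X) (S : Set X) : Pretop X where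
  V p := (ρ.V p).lift' (fun W => oSet ρ S (W ∩ S))
  pure_le p := le_lift'.mpr fun W hW => mem_pure.mpr ⟨W, hW, rfl⟩

/-- The θ-pretopology of a topological space: vicinities are closed neighborhoods. -/
def theta (X : Type*) [TopologicalSpace X] : Pretop X where
  V x := (nhds x).lift' closure
  pure_le x := le_lift'.mpr fun U hU =>
    mem_pure.mpr (subset_closure (mem_of_mem_nhds hU))

lemma Filter.exists_finset_subset_of_mem_generate_compl_image {X : Type*} {C : Set (Set X)}
    {B : Set X} (hB : B ∈ generate (compl '' C)) :
    ∃ D : Finset (Set X), ↑D ⊆ C ∧ (⋃ U ∈ D, U)ᶜ ⊆ B := by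
  obtain ⟨t, htC, htfin, htB⟩ := mem_generate_iff.mp hB
  obtain ⟨u, huC, rfl⟩ := subset_image_iff.mp htC
  have hu : u.Finite := htfin.of_finite_image compl_injective.injOn
  refine ⟨hu.toFinset, by simpa using huC, ?_⟩
  simpa [compl_iUnion₂, sInter_image] using htB

namespace Pretop

variable {X : Type*} (π : Pretop X)

lemma inh_compl (B : Set X) : π.inh Bᶜ = (π.adhS B)ᶜ := by
  rw [inh, compl_compl]

lemma notMem_adh_iff {F : Filter X} {x : X} : x ∉ π.adh F ↔ ∃ U ∈ π.V x, Uᶜ ∈ F := by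
  simp only [adh, Meets, mem_ofPred_eq, not_forall, exists_prop, not_nonempty_iff_eq_empty,
    ← disjoint_iff_inter_eq_empty, ← subset_compl_iff_disjoint_left]
  exact exists_congr fun U => and_congr_right fun _ =>
    ⟨fun ⟨_, hB, hBU⟩ => mem_of_superset hB hBU, fun hU => ⟨Uᶜ, hU, subset_rfl⟩⟩

lemma adhS_inter_eq_empty_iff {A B : Set X} : π.adhS B ∩ A = ∅ ↔ A ⊆ π.inh Bᶜ := by
  rw [inh_compl, subset_compl_iff_disjoint_left, disjoint_iff_inter_eq_empty]

lemma exists_inh_disjoint_iff {F : Filter X} {A : Set X} :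
    (∃ V : Set X, ∃ B ∈ F, A ⊆ π.inh V ∧ V ∩ B = ∅) ↔ ∃ B ∈ F, π.adhS B ∩ A = ∅ := by
  simp_rw [adhS_inter_eq_empty_iff, ← disjoint_iff_inter_eq_empty,
    ← subset_compl_iff_disjoint_right]
  constructor
  · rintro ⟨V, B, hB, hAV, hVB⟩
    exact ⟨B, hB, hAV.trans (π.inh_mono hVB)⟩
  · rintro ⟨B, hB, hAB⟩
    exact ⟨Bᶜ, B, hB, hAB, subset_rfl⟩

variable {π} in
lemma CoverCompact.exists_inh_compl_mem {A : Set X} (hA : π.CoverCompact A) {F : Filter X}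
    (hF : π.adh F ∩ A = ∅) : ∃ V : Set X, A ⊆ π.inh V ∧ Vᶜ ∈ F := by
  have hcover : π.IsCover {U | Uᶜ ∈ F} A := fun x hx => by
    obtain ⟨U, hU, hUF⟩ := π.notMem_adh_iff.mp fun hxF => hF.subset ⟨hxF, hx⟩
    exact ⟨U, hUF, hU⟩
  obtain ⟨D, hDC, hAD⟩ := hA _ hcover
  refine ⟨⋃ U ∈ D, U, hAD, ?_⟩
  rw [compl_iUnion₂]
  exact (biInter_finset_mem D).mpr fun U hU => hDC hU

lemma adh_generate_compl_inter_eq_empty {C : Set (Set X)} {A : Set X} (hC : π.IsCover C A) :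
    π.adh (generate (compl '' C)) ∩ A = ∅ := by
  refine eq_empty_of_forall_notMem fun x ⟨hxF, hxA⟩ => ?_
  obtain ⟨U, hUC, hU⟩ := hC x hxA
  exact π.notMem_adh_iff.mpr ⟨U, hU, mem_generate_of_mem (mem_image_of_mem compl hUC)⟩ hxF

lemma coverCompact_of_forall_exists_adhS {A : Set X}
    (h : ∀ F : Filter X, π.adh F ∩ A = ∅ → ∃ B ∈ F, π.adhS B ∩ A = ∅) : π.CoverCompact A := by
  intro C hC
  obtain ⟨B, hB, hBA⟩ := h _ (π.adh_generate_compl_inter_eq_empty hC)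
  obtain ⟨D, hDC, hDB⟩ := Filter.exists_finset_subset_of_mem_generate_compl_image hB
  have hAB : A ⊆ π.inh Bᶜ := π.adhS_inter_eq_empty_iff.mp hBA
  exact ⟨D, hDC, hAB.trans (π.inh_mono (compl_subset_comm.mp hDB))⟩

end Pretop

/-- Characterizations of cover-compact subsets of a pretopological space. -/
theorem coverCompact_tfae {X : Type*} (π : Pretop X) (A : Set X) :
    List.TFAE [
      ∀ F : Filter X, π.adh F ∩ A = ∅ → ∃ B ∈ F, π.adhS B ∩ A = ∅,
      π.CoverCompact A,
      ∀ F : Filter X, π.adh F ∩ A = ∅ →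
        ∃ V : Set X, ∃ B ∈ F, A ⊆ π.inh V ∧ V ∩ B = ∅] := by
  tfae_have 1 ↔ 3 := forall₂_congr fun _ _ => π.exists_inh_disjoint_iff.symm
  tfae_have 1 → 2 := π.coverCompact_of_forall_exists_adhS
  tfae_have 2 → 3 := fun hA _ hF =>
    let ⟨V, hAV, hV⟩ := hA.exists_inh_compl_mem hF
    ⟨V, Vᶜ, hV, hAV, inter_compl_self V⟩
  tfae_finish
end

section
/- If f : (X, π) → (Y, τ) is a perfect and continuous map between pretopological spaces, then f[adh_π A] = adh_τ f[A] for every A ⊆ X, and f⁻(y) is cover-compact for every y ∈ Y. -/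
/-!
Continuity gives `f[adh A] ⊆ adh f[A]`. Conversely, if `y ∈ adh f[A]` then `A` meets
`f⁻(V y)`, so perfectness produces a point of `f⁻(y)` adherent to `A`.

For the fibres, continuity makes every member of `f⁻(V y)` a vicinity of `K = f⁻(y)`, so the
vicinity filter of `K` is compact at `K`. A cover `C` of `K` without a finite subcover makes the
filter generated by the complements of members of `C` meet that vicinity filter; but no point
of `K` adheres to it, since such a point has some `U ∈ C` as a vicinity while `Uᶜ` is in the
filter.
-/

open Set Filter

namespace Pretop

variable {X : Type*} (π : Pretop X)

lemma mem_inh_iff {x : X} {A : Set X} : x ∈ π.inh A ↔ A ∈ π.V x := by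
  simp only [inh, adhS, mem_compl_iff, mem_ofPred_eq, not_forall, inter_compl_nonempty_iff,
    not_not, exists_prop, (π.V x).exists_mem_subset_iff]

lemma adh_principal (A : Set X) : π.adh (𝓟 A) = π.adhS A := by
  ext x
  refine ⟨fun hx U hU => hx U hU A (mem_principal_self A), fun hx U hU B hB => ?_⟩
  exact (hx U hU).mono (inter_subset_inter_right U (mem_principal.mp hB))

variable {π}

lemma CompactAt.mono {F G : Filter X} {K : Set X} (hF : π.CompactAt F K) (hGF : G ≤ F) :
    π.CompactAt G K :=
  fun H hHG => hF H fun A hA B hB => hHG A hA B (hGF hB)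

theorem CompactAt.coverCompact {K : Set X} (hK : π.CompactAt (VSet π K) K) :
    π.CoverCompact K := by
  intro C hC
  by_contra! hfin
  have hmeets : Meets (⨅ U ∈ C, 𝓟 Uᶜ) (VSet π K) := by
    intro B hB W hW
    obtain ⟨I, hI, hIC, hIB⟩ := mem_biInf_principal.mp hB
    obtain ⟨z, hzK, hz⟩ := not_subset.mp (hfin hI.toFinset (by rw [hI.coe_toFinset]; exact hIC))
    have hWz : W ∈ π.V z := π.mem_inh_iff.mp (mem_VSet.mp hW hzK)
    rw [inh, mem_compl_iff, not_not] at hz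
    obtain ⟨w, hwW, hwI⟩ := hz W hWz
    refine ⟨w, hIB ?_, hwW⟩
    simpa using hwI
  obtain ⟨x, hx, hxK⟩ := hK _ hmeets
  obtain ⟨U, hUC, hU⟩ := hC x hxK
  have hUc : Uᶜ ∈ ⨅ U ∈ C, 𝓟 Uᶜ :=
    mem_iInf_of_mem U (mem_iInf_of_mem hUC (mem_principal_self _))
  obtain ⟨w, hwU, hwUc⟩ := hx U hU Uᶜ hUc
  exact hwUc hwU

end Pretop

section Maps

variable {X Y : Type*} {π : Pretop X} {τ : Pretop Y} {f : X → Y}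

lemma meets_principal_comap_iff {A : Set X} {G : Filter Y} :
    Meets (𝓟 A) (G.comap f) ↔ ∀ W ∈ G, (W ∩ f '' A).Nonempty := by
  refine ⟨fun h W hW => ?_, fun h A' hA' B hB => ?_⟩
  · obtain ⟨a, haA, haW⟩ := h A (mem_principal_self A) _ (preimage_mem_comap hW)
    exact ⟨f a, haW, a, haA, rfl⟩
  · obtain ⟨W, hW, hWB⟩ := mem_comap.mp hB
    obtain ⟨_, hwW, a, haA, rfl⟩ := h W hW
    exact ⟨a, mem_principal.mp hA' haA, hWB hwW⟩

lemma ContPre.image_adhS_subset (hcont : ContPre π τ f) (A : Set X) :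
    f '' π.adhS A ⊆ τ.adhS (f '' A) := by
  rintro _ ⟨x, hx, rfl⟩ W hW
  obtain ⟨U, hU, hUW⟩ := hcont x W hW
  obtain ⟨z, hzU, hzA⟩ := hx U hU
  exact ⟨f z, hUW (mem_image_of_mem f hzU), mem_image_of_mem f hzA⟩

lemma ContPre.vSet_fiber_le_comap (hcont : ContPre π τ f) (y : Y) :
    VSet π (f ⁻¹' {y}) ≤ (τ.V y).comap f := by
  intro B hB x hx
  obtain ⟨W, hW, hWB⟩ := mem_comap.mp hB
  rw [mem_preimage, mem_singleton_iff] at hx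
  obtain ⟨U, hU, hUW⟩ := hcont x W (hx ▸ hW)
  exact π.mem_inh_iff.mpr (mem_of_superset hU fun u hu => hWB (hUW (mem_image_of_mem f hu)))

lemma PerfectPre.adhS_image_subset (hperf : PerfectPre π τ f) (A : Set X) :
    τ.adhS (f '' A) ⊆ f '' π.adhS A := by
  intro y hy
  obtain ⟨x, hx, hxy⟩ := hperf (τ.V y) y le_rfl (𝓟 A) (meets_principal_comap_iff.mpr hy)
  exact ⟨x, π.adh_principal A ▸ hx, hxy⟩

end Maps

/-- A perfect continuous map satisfies `f[adh_π A] = adh_τ f[A]` for every set `A`,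
and has cover-compact fibers. -/
theorem perfect_continuous_imp {X Y : Type*} (π : Pretop X) (τ : Pretop Y) (f : X → Y)
    (hperf : PerfectPre π τ f) (hcont : ContPre π τ f) :
    (∀ A : Set X, f '' π.adhS A = τ.adhS (f '' A)) ∧
    (∀ y : Y, π.CoverCompact (f ⁻¹' {y})) :=
  ⟨fun A => (hcont.image_adhS_subset A).antisymm (hperf.adhS_image_subset A),
    fun y => ((hperf (τ.V y) y le_rfl).mono (hcont.vSet_fiber_le_comap y)).coverCompact⟩
end

section
/- Let X be a Hausdorff topological space and A ⊆ X. Then A is an H-set in X (every cover of A by open subsets of X has a finite subfamily whose closures cover A) if and only if A is a compact subset of the pretopological space (X, θ): every filter F on X that meets A satisfies adh_θ F ∩ A ≠ ∅. -/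
open Set Filter

/-
A point `x` fails to be in the θ-adherence of `F` exactly when some open `U ∋ x` has
`(cl U)ᶜ ∈ F`. If `A` is an H-set and the θ-adherence of `F` misses `A`, these `U` cover `A`;
finitely many closures cover `A`, so the intersection of the corresponding `(cl U)ᶜ` is a member
of `F` disjoint from `A`. Conversely, if an open cover `C` of `A` has no finite subfamily whose
closures cover `A`, the filter generated by the `(cl U)ᶜ`, `U ∈ C`, meets `A`, and a point of its
θ-adherence in `A` would lie in some `U ∈ C` whose `(cl U)ᶜ` is a member.
-/

lemma Pretop.mem_adh_iff_compl_notMem {X : Type*} (π : Pretop X) {F : Filter X} {x : X} :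
    x ∈ π.adh F ↔ ∀ S ∈ π.V x, Sᶜ ∉ F := by
  refine ⟨fun hx S hS hSc => ?_, fun hx S hS B hB => ?_⟩
  · obtain ⟨y, hyS, hyB⟩ := hx S hS Sᶜ hSc
    exact hyB hyS
  · by_contra hSB
    exact hx S hS (mem_of_superset hB fun y hyB hyS => hSB ⟨y, hyS, hyB⟩)

section Theta

variable {X : Type*} [TopologicalSpace X]

lemma theta_mem_adh_iff {F : Filter X} {x : X} :
    x ∈ (theta X).adh F ↔ ∀ U, IsOpen U → x ∈ U → (closure U)ᶜ ∉ F := by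
  rw [Pretop.mem_adh_iff_compl_notMem]
  refine ((nhds_basis_opens x).lift' (monotone_closure X)).forall_iff ?_ |>.trans ?_
  · exact fun S T hST hS hT => hS (mem_of_superset hT (compl_subset_compl.mpr hST))
  · exact forall_congr' fun U => by rw [and_comm, and_imp]; rfl

def IsHSet (A : Set X) : Prop :=
  ∀ C : Set (Set X), (∀ U ∈ C, IsOpen U) → A ⊆ ⋃₀ C →
    ∃ D : Finset (Set X), ↑D ⊆ C ∧ A ⊆ ⋃ U ∈ D, closure U

lemma IsHSet.theta_adh_inter_nonempty {A : Set X} (hA : IsHSet A) {F : Filter X}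
    (hF : ∀ B ∈ F, (B ∩ A).Nonempty) : ((theta X).adh F ∩ A).Nonempty := by
  by_contra! hadh
  let C : Set (Set X) := {U | IsOpen U ∧ (closure U)ᶜ ∈ F}
  have hAC : A ⊆ ⋃₀ C := fun x hxA => by
    have hx : x ∉ (theta X).adh F := fun hx => hadh.subset ⟨hx, hxA⟩
    simp only [theta_mem_adh_iff, not_forall, not_not] at hx
    obtain ⟨U, hU, hxU, hUF⟩ := hx
    exact ⟨U, ⟨hU, hUF⟩, hxU⟩
  obtain ⟨D, hDC, hAD⟩ := hA C (fun U hU => hU.1) hAC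
  have hmem : (⋂ U ∈ D, (closure U)ᶜ) ∈ F :=
    (biInter_finset_mem D).mpr fun U hU => (hDC hU).2
  obtain ⟨z, hzD, hzA⟩ := hF _ hmem
  obtain ⟨U, hU, hzU⟩ := mem_iUnion₂.mp (hAD hzA)
  exact mem_iInter₂.mp hzD U hU hzU

lemma isHSet_of_theta_adh_inter_nonempty {A : Set X}
    (hA : ∀ F : Filter X, (∀ B ∈ F, (B ∩ A).Nonempty) → ((theta X).adh F ∩ A).Nonempty) :
    IsHSet A := by
  intro C hC hAC
  by_contra! hD
  let F : Filter X := ⨅ U ∈ C, 𝓟 (closure U)ᶜ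
  have hF : ∀ B ∈ F, (B ∩ A).Nonempty := by
    intro B hB
    obtain ⟨I, hI, hIC, hIB⟩ := mem_biInf_principal.mp hB
    obtain ⟨z, hzA, hzI⟩ := not_subset.mp <| hD hI.toFinset (by rw [hI.coe_toFinset]; exact hIC)
    refine ⟨z, hIB ?_, hzA⟩
    simpa using hzI
  obtain ⟨x, hxF, hxA⟩ := hA F hF
  obtain ⟨U, hUC, hxU⟩ := hAC hxA
  exact theta_mem_adh_iff.mp hxF U (hC U hUC) hxU
    (mem_iInf_of_mem U (mem_iInf_of_mem hUC (mem_principal_self _)))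

end Theta

theorem hSet_iff_theta_compactSubset_general {X : Type*} [TopologicalSpace X]
    (A : Set X) :
    (∀ C : Set (Set X), (∀ U ∈ C, IsOpen U) → A ⊆ ⋃₀ C →
      ∃ D : Finset (Set X), ↑D ⊆ C ∧ A ⊆ ⋃ U ∈ D, closure U) ↔
    (∀ F : Filter X, (∀ B ∈ F, (B ∩ A).Nonempty) →
      ((theta X).adh F ∩ A).Nonempty) :=
  ⟨fun hA _ => IsHSet.theta_adh_inter_nonempty hA, isHSet_of_theta_adh_inter_nonempty⟩

/-- `A` is an H-set in a Hausdorff space `X` iff `A` is a compact subset of the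
pretopological space `(X, θ)`. -/
theorem hSet_iff_theta_compactSubset {X : Type*} [TopologicalSpace X] [T2Space X]
    (A : Set X) :
    (∀ C : Set (Set X), (∀ U ∈ C, IsOpen U) → A ⊆ ⋃₀ C →
      ∃ D : Finset (Set X), ↑D ⊆ C ∧ A ⊆ ⋃ U ∈ D, closure U) ↔
    (∀ F : Filter X, (∀ B ∈ F, (B ∩ A).Nonempty) →
      ((theta X).adh F ∩ A).Nonempty) :=
  hSet_iff_theta_compactSubset_general A
end
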